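/- arXiv:1504.08144 — 4 statements merged into one kernel-verified Lean document; each statement's English description precedes it below -/
import Mathlib

section
/- Let a, b, c, μ ∈ ℂ with Re a > Re μ > 0, and assume c is not a nonpositive integer. Then for every real x ∈ (-∞,0) ∪ (0,1), one has ∫_I |y|^{a-μ-1} F(a,b;c;y) · |x-y|^{μ-1}/Γ(μ) dy = (Γ(a-μ)/Γ(a)) · |x|^{a-1} · F(a-μ,b;c;x), where I is the open interval with endpoints 0 and x (fractional integral transformation of type a−, due to Askey and Fitch). -/
open MeasureTheory Set Complex Filter

/-- Pochhammer symbol `(a)_k = a (a+1) ⋯ (a+k-1)`. -/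
noncomputable def poch (a : ℂ) (k : ℕ) : ℂ := ∏ i ∈ Finset.range k, (a + i)

/-- The Gauss hypergeometric function `F(a,b;c;x)` for real `x < 1`, defined by the
power series on `[0,1)` and by the (agreeing) Pfaff series for `x < 0`. -/
noncomputable def hypF (a b c : ℂ) (x : ℝ) : ℂ :=
  if 0 ≤ x then
    ∑' k : ℕ, poch a k * poch b k / (poch c k * (Nat.factorial k : ℂ)) * (x : ℂ) ^ k
  else
    ((1 - x : ℝ) : ℂ) ^ (-a) *
      ∑' k : ℕ, poch a k * poch (c - b) k / (poch c k * (Nat.factorial k : ℂ)) *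
        (((x / (x - 1) : ℝ)) : ℂ) ^ k

/-!
For `x > 0` substitute `y = x u`; for `x < 0` write `F` by its Pfaff series and substitute
`y = x u / (1 - x + x u)`, which maps `(0,1)` onto `(x,0)` and turns the Pfaff argument `y/(y-1)`
into `(x/(x-1)) u`. In both cases the integral becomes the Euler transform
`∫₀¹ u^(s-1) (1-u)^(μ-1) ₂F₁(s+μ,b;c;z u) du` with `s = a - μ` and `|z| < 1`, which is evaluated
term by term by Beta integrals: `Γ(s+k)/Γ(s+μ+k)` turns `(s+μ)_k` into `(s)_k`.
-/

open scoped Nat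

lemma poch_eq_eval_ascPochhammer (a : ℂ) (k : ℕ) : poch a k = (ascPochhammer ℂ k).eval a := by
  induction k with
  | zero => simp [poch]
  | succ k ih => rw [poch, Finset.prod_range_succ, ← poch, ih, ascPochhammer_succ_eval]

lemma tsum_poch_eq_ordinaryHypergeometric (a b c z : ℂ) :
    ∑' k : ℕ, poch a k * poch b k / (poch c k * (k ! : ℂ)) * z ^ k = ₂F₁ a b c z := by
  rw [ordinaryHypergeometric, ordinaryHypergeometric_sum_eq]
  refine tsum_congr fun k => ?_
  simp only [poch_eq_eval_ascPochhammer, smul_eq_mul, div_eq_mul_inv, mul_inv]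
  ring

lemma hypF_of_nonneg (a b c : ℂ) {x : ℝ} (hx : 0 ≤ x) : hypF a b c x = ₂F₁ a b c (x : ℂ) := by
  rw [hypF, if_pos hx, tsum_poch_eq_ordinaryHypergeometric]

lemma hypF_of_neg (a b c : ℂ) {x : ℝ} (hx : x < 0) :
    hypF a b c x = ((1 - x : ℝ) : ℂ) ^ (-a) * ₂F₁ a (c - b) c ((x / (x - 1) : ℝ) : ℂ) := by
  rw [hypF, if_neg hx.not_ge, tsum_poch_eq_ordinaryHypergeometric]

lemma one_le_radius_ordinaryHypergeometricSeries (a b c : ℂ) :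
    1 ≤ (ordinaryHypergeometricSeries ℂ a b c).radius := by
  by_cases h : ∃ k : ℕ, (k : ℂ) = -a ∨ (k : ℂ) = -b ∨ (k : ℂ) = -c
  · obtain ⟨k, hk | hk | hk⟩ := h
    · rw [show a = -(k : ℂ) by rw [hk, neg_neg], ordinaryHypergeometric_radius_top_of_neg_nat₁]
      exact le_top
    · rw [show b = -(k : ℂ) by rw [hk, neg_neg], ordinaryHypergeometric_radius_top_of_neg_nat₂]
      exact le_top
    · rw [show c = -(k : ℂ) by rw [hk, neg_neg], ordinaryHypergeometric_radius_top_of_neg_nat₃]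
      exact le_top
  · push Not at h
    rw [ordinaryHypergeometricSeries_radius_eq_one ℂ a b c h]

lemma summable_norm_ordinaryHypergeometricCoefficient_mul_pow (a b c : ℂ) {r : ℝ}
    (hr0 : 0 ≤ r) (hr : r < 1) :
    Summable fun k => ‖ordinaryHypergeometricCoefficient a b c k‖ * r ^ k := by
  lift r to NNReal using hr0
  have := (ordinaryHypergeometricSeries ℂ a b c).summable_norm_mul_pow
    ((ENNReal.coe_lt_one_iff.mpr (by exact_mod_cast hr)).trans_le
      (one_le_radius_ordinaryHypergeometricSeries a b c))
  simpa only [ordinaryHypergeometricSeries, FormalMultilinearSeries.ofScalars_norm] using this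

section Euler

variable {s μ : ℂ}

lemma integrableOn_Ioo_cpow_mul_one_sub_cpow (hs : 0 < s.re) (hμ : 0 < μ.re) :
    IntegrableOn (fun u : ℝ => (u : ℂ) ^ (s - 1) * (1 - (u : ℂ)) ^ (μ - 1)) (Ioo 0 1) :=
  ((intervalIntegrable_iff_integrableOn_Ioc_of_le zero_le_one).mp
    (Complex.betaIntegral_convergent hs hμ)).mono_set Ioo_subset_Ioc_self

lemma integral_Ioo_cpow_mul_one_sub_cpow (hs : 0 < s.re) (hμ : 0 < μ.re) :
    ∫ u in Ioo (0 : ℝ) 1, (u : ℂ) ^ (s - 1) * (1 - (u : ℂ)) ^ (μ - 1)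
      = Gamma s * Gamma μ / Gamma (s + μ) := by
  rw [Complex.Gamma_mul_Gamma_eq_betaIntegral hs hμ,
    mul_div_cancel_left₀ _ (Complex.Gamma_ne_zero_of_re_pos (by simpa using add_pos hs hμ)),
    Complex.betaIntegral, intervalIntegral.integral_of_le zero_le_one,
    integral_Ioc_eq_integral_Ioo]

lemma Gamma_add_nat_eq_mul_Gamma (hs : 0 < s.re) (k : ℕ) :
    Gamma (s + k) = (ascPochhammer ℂ k).eval s * Gamma s := by
  rw [← Complex.Gamma_add_nat_div_Gamma_eq s fun n h => by simp [h] at hs; linarith,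
    div_mul_cancel₀ _ (Complex.Gamma_ne_zero_of_re_pos hs)]

lemma ordinaryHypergeometricCoefficient_mul_Gamma_div_Gamma (hs : 0 < s.re) (hμ : 0 < μ.re)
    (b c : ℂ) (k : ℕ) :
    ordinaryHypergeometricCoefficient (s + μ) b c k * (Gamma (s + k) / Gamma (s + μ + k))
      = Gamma s / Gamma (s + μ) * ordinaryHypergeometricCoefficient s b c k := by
  have hsμ : 0 < (s + μ).re := by simpa using add_pos hs hμ
  have hA : (ascPochhammer ℂ k).eval (s + μ) ≠ 0 := by
    rw [← mul_ne_zero_iff_right (Complex.Gamma_ne_zero_of_re_pos hsμ),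
      ← Gamma_add_nat_eq_mul_Gamma hsμ]
    exact Complex.Gamma_ne_zero_of_re_pos (by simpa using hsμ.trans_le (by simp))
  have hΓ := Complex.Gamma_ne_zero_of_re_pos hsμ
  rw [Gamma_add_nat_eq_mul_Gamma hs, Gamma_add_nat_eq_mul_Gamma hsμ]
  field_simp

lemma integral_Ioo_cpow_mul_ordinaryHypergeometric (hs : 0 < s.re) (hμ : 0 < μ.re) (b c : ℂ)
    {z : ℂ} (hz : ‖z‖ < 1) :
    ∫ u in Ioo (0 : ℝ) 1, (u : ℂ) ^ (s - 1) * (1 - (u : ℂ)) ^ (μ - 1) * ₂F₁ (s + μ) b c (z * u)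
      = Gamma s * Gamma μ / Gamma (s + μ) * ₂F₁ s b c z := by
  set w : ℝ → ℂ := fun u => (u : ℂ) ^ (s - 1) * (1 - (u : ℂ)) ^ (μ - 1)
  set C : ℕ → ℂ := ordinaryHypergeometricCoefficient (s + μ) b c
  set F : ℕ → ℝ → ℂ := fun k u => w u * (C k * (z * u) ^ k)
  have hsk (k : ℕ) : 0 < (s + k).re := by simpa using hs.trans_le (by simp)
  have hF (k : ℕ) : ∀ u ∈ Ioo (0 : ℝ) 1,
      F k u = C k * z ^ k * ((u : ℂ) ^ (s + k - 1) * (1 - (u : ℂ)) ^ (μ - 1)) := by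
    intro u hu
    have hu : (u : ℂ) ≠ 0 := by exact_mod_cast hu.1.ne'
    rw [add_sub_right_comm, Complex.cpow_add _ _ hu, Complex.cpow_natCast]
    ring
  have hFint (k : ℕ) : IntegrableOn (F k) (Ioo 0 1) :=
    IntegrableOn.congr_fun ((integrableOn_Ioo_cpow_mul_one_sub_cpow (hsk k) hμ).const_mul _)
      (fun u hu => (hF k u hu).symm) measurableSet_Ioo
  have hFnorm (k : ℕ) : ∀ u ∈ Ioo (0 : ℝ) 1, ‖F k u‖ ≤ ‖C k‖ * ‖z‖ ^ k * ‖w u‖ := by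
    intro u hu
    have hu : ‖(u : ℂ)‖ ^ k ≤ 1 := by
      rw [Complex.norm_real, Real.norm_of_nonneg hu.1.le]
      exact pow_le_one₀ hu.1.le hu.2.le
    calc ‖F k u‖ = ‖C k‖ * ‖z‖ ^ k * ‖w u‖ * ‖(u : ℂ)‖ ^ k := by
          simp only [F, norm_mul, norm_pow, mul_pow]; ring
      _ ≤ ‖C k‖ * ‖z‖ ^ k * ‖w u‖ := mul_le_of_le_one_right (by positivity) hu
  have hsum : Summable fun k => ∫ u in Ioo (0 : ℝ) 1, ‖F k u‖ := by
    refine Summable.of_nonneg_of_le (fun k => integral_nonneg fun u => norm_nonneg _)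
      (fun k => ?_) ((summable_norm_ordinaryHypergeometricCoefficient_mul_pow (s + μ) b c
        (norm_nonneg z) hz).mul_right (∫ u in Ioo (0 : ℝ) 1, ‖w u‖))
    rw [← integral_const_mul]
    exact setIntegral_mono_on (hFint k).norm
      ((integrableOn_Ioo_cpow_mul_one_sub_cpow hs hμ).norm.const_mul _) measurableSet_Ioo
      (hFnorm k)
  have hterm (k : ℕ) : ∫ u in Ioo (0 : ℝ) 1, F k u =
      Gamma s * Gamma μ / Gamma (s + μ) * (ordinaryHypergeometricCoefficient s b c k * z ^ k) := by
    rw [setIntegral_congr_fun measurableSet_Ioo (hF k), integral_const_mul,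
      integral_Ioo_cpow_mul_one_sub_cpow (hsk k) hμ, add_right_comm s]
    linear_combination (z ^ k * Gamma μ) *
      ordinaryHypergeometricCoefficient_mul_Gamma_div_Gamma hs hμ b c k
  calc ∫ u in Ioo (0 : ℝ) 1, w u * ₂F₁ (s + μ) b c (z * u)
      = ∫ u in Ioo (0 : ℝ) 1, ∑' k, F k u := by
        simp only [F, tsum_mul_left, ordinaryHypergeometric, ordinaryHypergeometric_sum_eq,
          smul_eq_mul, C]
    _ = ∑' k, ∫ u in Ioo (0 : ℝ) 1, F k u :=
        (integral_tsum_of_summable_integral_norm hFint hsum).symm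
    _ = Gamma s * Gamma μ / Gamma (s + μ) * ₂F₁ s b c z := by
        simp only [hterm, tsum_mul_left, ordinaryHypergeometric, ordinaryHypergeometric_sum_eq,
          smul_eq_mul]

end Euler

noncomputable def pfaffSubst (x u : ℝ) : ℝ := x * u / (1 - x + x * u)

section PfaffSubst

variable {x u : ℝ}

lemma pfaffSubst_denom_pos (hx : x < 0) (hu : u ≤ 1) : 0 < 1 - x + x * u := by nlinarith

lemma hasDerivAt_pfaffSubst (hx : x < 0) (hu : u ≤ 1) :
    HasDerivAt (pfaffSubst x) (x * (1 - x) / (1 - x + x * u) ^ 2) u := by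
  have hlin : HasDerivAt (fun u : ℝ => x * u) x u := hasDerivAt_const_mul x
  exact (hlin.div (hlin.const_add (1 - x)) (pfaffSubst_denom_pos hx hu).ne').congr_deriv (by ring)

lemma injOn_pfaffSubst (hx : x < 0) : InjOn (pfaffSubst x) (Ioo 0 1) := by
  intro u hu v hv h
  rw [pfaffSubst, pfaffSubst, div_eq_div_iff (pfaffSubst_denom_pos hx hu.2.le).ne'
    (pfaffSubst_denom_pos hx hv.2.le).ne'] at h
  have : (x * (1 - x)) * (u - v) = 0 := by linear_combination h
  rcases mul_eq_zero.mp this with h' | h'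
  · nlinarith
  · linarith

lemma image_pfaffSubst_Ioo (hx : x < 0) : pfaffSubst x '' Ioo 0 1 = Ioo x 0 := by
  refine Subset.antisymm ?_ ?_
  · rintro _ ⟨u, hu, rfl⟩
    have hD := pfaffSubst_denom_pos hx hu.2.le
    rw [pfaffSubst, mem_Ioo, lt_div_iff₀ hD, div_neg_iff]
    constructor
    · nlinarith [mul_pos (mul_pos (neg_pos.mpr hx) (by linarith : 0 < 1 - x)) (sub_pos.mpr hu.2)]
    · exact Or.inr ⟨by nlinarith [hu.1], hD⟩
  · have hcont : ContinuousOn (pfaffSubst x) (Icc 0 1) := fun u hu =>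
      (hasDerivAt_pfaffSubst hx hu.2).continuousAt.continuousWithinAt
    simpa [pfaffSubst] using intermediate_value_Ioo' zero_le_one hcont

end PfaffSubst

section Kernel

lemma ofReal_cpow_eq_exp {r : ℝ} (hr : 0 < r) (s : ℂ) :
    ((r : ℝ) : ℂ) ^ s = exp (s * (Real.log r : ℂ)) := by
  rw [Complex.cpow_def_of_ne_zero (by exact_mod_cast hr.ne'), Complex.ofReal_log hr.le, mul_comm]

variable (a μ : ℂ) {p q D u v : ℝ}

lemma cpow_kernel_scale (hp : 0 < p) (hu : 0 < u) (hv : 0 < v) :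
    (p : ℂ) * (((p * u : ℝ) : ℂ) ^ (a - μ - 1) * ((p * v : ℝ) : ℂ) ^ (μ - 1))
      = (p : ℂ) ^ (a - 1) * ((u : ℂ) ^ (a - μ - 1) * (v : ℂ) ^ (μ - 1)) := by
  nth_rw 1 [← Complex.cpow_one (p : ℂ)]
  simp (disch := positivity) only [ofReal_cpow_eq_exp, Real.log_mul, ← exp_add]
  congr 1
  push_cast
  ring

lemma cpow_kernel_pfaffSubst (hp : 0 < p) (hq : 0 < q) (hD : 0 < D) (hu : 0 < u) (hv : 0 < v) :
    ((p * q / D ^ 2 : ℝ) : ℂ) * (((p * u / D : ℝ) : ℂ) ^ (a - μ - 1) * ((q / D : ℝ) : ℂ) ^ (-a)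
      * ((p * q * v / D : ℝ) : ℂ) ^ (μ - 1))
      = (p : ℂ) ^ (a - 1) * (q : ℂ) ^ (μ - a) * ((u : ℂ) ^ (a - μ - 1) * (v : ℂ) ^ (μ - 1)) := by
  rw [← Complex.cpow_one ((p * q / D ^ 2 : ℝ) : ℂ)]
  simp (disch := positivity) only [ofReal_cpow_eq_exp, Real.log_mul, Real.log_div, Real.log_pow,
    ← exp_add]
  congr 1
  push_cast
  ring

end Kernel

section Integrand

variable {a b c μ : ℂ} {x u : ℝ}

lemma abs_smul_integrand_mul_left (hx : 0 < x) (hu : u ∈ Ioo 0 1) :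
    |x| • (((|x * u| : ℝ) : ℂ) ^ (a - μ - 1) * hypF a b c (x * u) *
        (((|x - x * u| : ℝ) : ℂ) ^ (μ - 1) / Gamma μ))
      = (x : ℂ) ^ (a - 1) / Gamma μ *
        ((u : ℂ) ^ (a - μ - 1) * (1 - (u : ℂ)) ^ (μ - 1) * ₂F₁ a b c ((x : ℂ) * u)) := by
  have hxu : 0 < x * u := mul_pos hx hu.1
  have hv : 0 < 1 - u := sub_pos.mpr hu.2
  rw [hypF_of_nonneg _ _ _ hxu.le, Complex.ofReal_mul x u, abs_of_pos hx, abs_of_pos hxu,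
    show x - x * u = x * (1 - u) by ring, abs_of_pos (mul_pos hx hv), Complex.real_smul,
    show 1 - (u : ℂ) = ((1 - u : ℝ) : ℂ) by push_cast; ring]
  linear_combination (₂F₁ a b c ((x : ℂ) * u) / Gamma μ) * cpow_kernel_scale a μ hx hu.1 hv

lemma abs_deriv_smul_integrand_pfaffSubst (hx : x < 0) (hu : u ∈ Ioo 0 1) :
    |x * (1 - x) / (1 - x + x * u) ^ 2| •
        (((|pfaffSubst x u| : ℝ) : ℂ) ^ (a - μ - 1) * hypF a b c (pfaffSubst x u) *
          (((|x - pfaffSubst x u| : ℝ) : ℂ) ^ (μ - 1) / Gamma μ))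
      = ((-x : ℝ) : ℂ) ^ (a - 1) * ((1 - x : ℝ) : ℂ) ^ (μ - a) / Gamma μ *
        ((u : ℂ) ^ (a - μ - 1) * (1 - (u : ℂ)) ^ (μ - 1) *
          ₂F₁ a (c - b) c (((x / (x - 1) : ℝ) : ℂ) * u)) := by
  have hD := pfaffSubst_denom_pos hx hu.2.le
  have hp : 0 < -x := neg_pos.mpr hx
  have hq : 0 < 1 - x := by linarith
  have hv : 0 < 1 - u := sub_pos.mpr hu.2
  have hy : pfaffSubst x u < 0 := div_neg_of_neg_of_pos (mul_neg_of_neg_of_pos hx hu.1) hD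
  have habs_deriv : |x * (1 - x) / (1 - x + x * u) ^ 2| = -x * (1 - x) / (1 - x + x * u) ^ 2 := by
    rw [abs_div, abs_mul, abs_of_neg hx, abs_of_pos hq, abs_of_pos (pow_pos hD 2)]
  have habs : |pfaffSubst x u| = -x * u / (1 - x + x * u) := by
    rw [abs_of_neg hy, pfaffSubst]; ring
  have habs_sub : |x - pfaffSubst x u| = -x * (1 - x) * (1 - u) / (1 - x + x * u) := by
    rw [show x - pfaffSubst x u = -(-x * (1 - x) * (1 - u) / (1 - x + x * u)) by
      rw [pfaffSubst]; field_simp; ring, abs_neg, abs_of_pos (by positivity)]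
  have hone_sub : 1 - pfaffSubst x u = (1 - x) / (1 - x + x * u) := by
    rw [pfaffSubst]; field_simp; ring
  have hratio : pfaffSubst x u / (pfaffSubst x u - 1) = x / (x - 1) * u := by
    rw [pfaffSubst]; field_simp; ring
  rw [hypF_of_neg _ _ _ hy, hratio, Complex.ofReal_mul (x / (x - 1)) u, habs_deriv, habs, habs_sub,
    hone_sub, Complex.real_smul,
    show 1 - (u : ℂ) = ((1 - u : ℝ) : ℂ) by push_cast; ring]
  linear_combination (₂F₁ a (c - b) c (((x / (x - 1) : ℝ) : ℂ) * u) / Gamma μ) *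
    cpow_kernel_pfaffSubst a μ hp hq hD hu.1 hv

end Integrand

theorem stmt_3_general (a b c μ : ℂ) (ha : μ.re < a.re) (hμ : 0 < μ.re)
    (x : ℝ) (hx : x < 0 ∨ (0 < x ∧ x < 1)) :
    ∫ y in uIoo 0 x,
        ((|y| : ℝ) : ℂ) ^ (a - μ - 1) * hypF a b c y *
          (((|x - y| : ℝ) : ℂ) ^ (μ - 1) / Complex.Gamma μ)
      = Complex.Gamma (a - μ) / Complex.Gamma a * ((|x| : ℝ) : ℂ) ^ (a - 1) *
        hypF (a - μ) b c x := by
  have hs : 0 < (a - μ).re := by simpa using ha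
  have hΓμ : Gamma μ ≠ 0 := Complex.Gamma_ne_zero_of_re_pos hμ
  have euler (b : ℂ) {z : ℂ} (hz : ‖z‖ < 1) :=
    sub_add_cancel a μ ▸ integral_Ioo_cpow_mul_ordinaryHypergeometric hs hμ b c hz
  rcases hx with hneg | ⟨hpos, hx1⟩
  · have hX : ‖((x / (x - 1) : ℝ) : ℂ)‖ < 1 := by
      rw [Complex.norm_real, Real.norm_of_nonneg (div_nonneg_of_nonpos hneg.le (by linarith)),
        div_lt_one_of_neg (by linarith)]
      linarith
    rw [uIoo_of_ge hneg.le, ← image_pfaffSubst_Ioo hneg,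
      integral_image_eq_integral_abs_deriv_smul measurableSet_Ioo
        (fun u hu => (hasDerivAt_pfaffSubst hneg hu.2.le).hasDerivWithinAt)
        (injOn_pfaffSubst hneg),
      setIntegral_congr_fun measurableSet_Ioo fun u hu =>
        abs_deriv_smul_integrand_pfaffSubst hneg hu,
      integral_const_mul, euler (c - b) hX, hypF_of_neg _ _ _ hneg, abs_of_neg hneg,
      ← neg_sub a μ]
    field_simp
  · have hX : ‖(x : ℂ)‖ < 1 := by rwa [Complex.norm_real, Real.norm_of_nonneg hpos.le]
    have himage : (x * ·) '' Ioo 0 1 = Ioo 0 x := by simpa using image_mul_left_Ioo hpos 0 1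
    rw [uIoo_of_le hpos.le, ← himage,
      integral_image_eq_integral_abs_deriv_smul measurableSet_Ioo
        (fun _ _ => (hasDerivAt_const_mul x).hasDerivWithinAt)
        (mul_right_injective₀ hpos.ne').injOn,
      setIntegral_congr_fun measurableSet_Ioo fun u hu => abs_smul_integrand_mul_left hpos hu,
      integral_const_mul, euler b hX, hypF_of_nonneg _ _ _ hpos.le, abs_of_pos hpos]
    field_simp

/-- Fractional integral transformation of type `a-` (Askey–Fitch). -/
theorem stmt_3 (a b c μ : ℂ) (ha : μ.re < a.re) (hμ : 0 < μ.re)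
    (hc1 : ∀ n : ℕ, c ≠ -(n : ℂ))
    (x : ℝ) (hx : x < 0 ∨ (0 < x ∧ x < 1)) :
    ∫ y in uIoo 0 x,
        ((|y| : ℝ) : ℂ) ^ (a - μ - 1) * hypF a b c y *
          (((|x - y| : ℝ) : ℂ) ^ (μ - 1) / Complex.Gamma μ)
      = Complex.Gamma (a - μ) / Complex.Gamma a * ((|x| : ℝ) : ℂ) ^ (a - 1) *
        hypF (a - μ) b c x :=
  stmt_3_general a b c μ ha hμ x hx
end

section
/- Let a, b, c, μ ∈ ℂ and let x, y be real numbers with 0 < y < x. Then y^{1-c} · L_{1-a,1-b,2-c;y}( y ↦ y^{c-1}(x-y)^{μ-1} ) = x^{c+μ-1} · L_{a,b,c+μ;x}( x ↦ x^{1-c-μ}(x-y)^{μ-1} ), where on the left-hand side the operator acts in the variable y (with x held fixed) and on the right-hand side it acts in the variable x (with y held fixed). This is the transmutation identity underlying Bateman's fractional integral formula. -/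
/-!
Both functions are products `F = u^p v^q` of powers of affine functions, so their logarithmic
derivative `h = p u'/u + q v'/v` is rational and `F'' = F (h^2 + h')`. Hence each side is `F`
times a rational function; the prefactors `y^{1-c}` and `x^{c+μ-1}` cancel the powers of `y` and
`x`, leaving `(x-y)^{μ-1}` times two rational functions of `x, y`, which agree.
-/

open MeasureTheory Set Complex Filter

/-- The hypergeometric differential operator
`(L_{a,b,c} f)(x) = x(1-x) f''(x) + (c-(a+b+1)x) f'(x) - ab f(x)`. -/
noncomputable def hypL (a b c : ℂ) (f : ℝ → ℂ) (x : ℝ) : ℂ :=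
  (x : ℂ) * (1 - x) * deriv (deriv f) x + (c - (a + b + 1) * x) * deriv f x - a * b * f x

open Topology

theorem deriv_deriv_eq_of_hasDerivAt_mul {𝕜 𝔸 : Type*} [NontriviallyNormedField 𝕜]
    [NormedCommRing 𝔸] [NormedAlgebra 𝕜 𝔸] {F h : 𝕜 → 𝔸} {t : 𝕜} {h' : 𝔸}
    (hF : ∀ᶠ s in 𝓝 t, HasDerivAt F (F s * h s) s) (hh : HasDerivAt h h' t) :
    deriv (deriv F) t = F t * (h t ^ 2 + h') := by
  have hderiv : deriv F =ᶠ[𝓝 t] fun s => F s * h s := hF.mono fun s hs => hs.deriv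
  rw [hderiv.deriv_eq, (hF.self_of_nhds.fun_mul hh).deriv]
  ring

theorem hypL_eq_of_hasDerivAt_mul {F h : ℝ → ℂ} {t : ℝ} {h' : ℂ} (a b c : ℂ)
    (hF : ∀ᶠ s in 𝓝 t, HasDerivAt F (F s * h s) s) (hh : HasDerivAt h h' t) :
    hypL a b c F t =
      F t * (t * (1 - t) * (h t ^ 2 + h') + (c - (a + b + 1) * t) * h t - a * b) := by
  rw [hypL, deriv_deriv_eq_of_hasDerivAt_mul hF hh, hF.self_of_nhds.deriv]
  ring

theorem HasDerivAt.ofReal_cpow_const {u : ℝ → ℝ} {u' t : ℝ} (p : ℂ) (hu : HasDerivAt u u' t)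
    (hpos : 0 < u t) : HasDerivAt (fun s => (u s : ℂ) ^ p) ((u t : ℂ) ^ p * (p * u' / u t)) t := by
  have hne : (u t : ℂ) ≠ 0 := ofReal_ne_zero.2 hpos.ne'
  refine ((hasStrictDerivAt_cpow_const (ofReal_mem_slitPlane.2 hpos)).hasDerivAt.comp t
    hu.ofReal_comp).congr_deriv ?_
  rw [cpow_sub _ _ hne, cpow_one]
  field_simp

theorem HasDerivAt.ofReal_cpow_mul_ofReal_cpow {u v : ℝ → ℝ} {u' v' t : ℝ} (p q : ℂ)
    (hu : HasDerivAt u u' t) (hv : HasDerivAt v v' t) (hu0 : 0 < u t) (hv0 : 0 < v t) :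
    HasDerivAt (fun s => (u s : ℂ) ^ p * (v s : ℂ) ^ q)
      ((u t : ℂ) ^ p * (v t : ℂ) ^ q * (p * u' / u t + q * v' / v t)) t := by
  refine ((hu.ofReal_cpow_const p hu0).fun_mul (hv.ofReal_cpow_const q hv0)).congr_deriv ?_
  ring

theorem HasDerivAt.const_div_ofReal {u : ℝ → ℝ} {u' t : ℝ} (k : ℂ) (hu : HasDerivAt u u' t)
    (hne : u t ≠ 0) : HasDerivAt (fun s => k / u s) (-(k * u' / u t ^ 2)) t := by
  refine ((hu.ofReal_comp.fun_inv (ofReal_ne_zero.2 hne)).const_mul k).congr_deriv ?_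
  ring

theorem hypL_ofReal_cpow_mul_ofReal_cpow (a b c p q : ℂ) {u v : ℝ → ℝ} {u' v' t : ℝ}
    (hu : ∀ s, HasDerivAt u u' s) (hv : ∀ s, HasDerivAt v v' s) (hu0 : 0 < u t) (hv0 : 0 < v t) :
    hypL a b c (fun s => (u s : ℂ) ^ p * (v s : ℂ) ^ q) t =
      (u t : ℂ) ^ p * (v t : ℂ) ^ q *
        (t * (1 - t) * ((p * u' / u t + q * v' / v t) ^ 2
            - p * u' ^ 2 / u t ^ 2 - q * v' ^ 2 / v t ^ 2)
          + (c - (a + b + 1) * t) * (p * u' / u t + q * v' / v t) - a * b) := by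
  have hpos : ∀ᶠ s in 𝓝 t, 0 < u s ∧ 0 < v s :=
    ((hu t).continuousAt.eventually (lt_mem_nhds hu0)).and
      ((hv t).continuousAt.eventually (lt_mem_nhds hv0))
  have hlogDeriv := ((hu t).const_div_ofReal (p * u') hu0.ne').add
    ((hv t).const_div_ofReal (q * v') hv0.ne')
  rw [hypL_eq_of_hasDerivAt_mul a b c
    (hpos.mono fun s hs => (hu s).ofReal_cpow_mul_ofReal_cpow p q (hv s) hs.1 hs.2) hlogDeriv]
  ring

/-- The transmutation identity underlying Bateman's fractional integral formula:
`y^{1-c} L_{1-a,1-b,2-c;y}(y^{c-1}(x-y)^{μ-1}) = x^{c+μ-1} L_{a,b,c+μ;x}(x^{1-c-μ}(x-y)^{μ-1})`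
for `0 < y < x`. -/
theorem stmt_8 (a b c μ : ℂ) (x y : ℝ) (hy : 0 < y) (hyx : y < x) :
    (y : ℂ) ^ (1 - c) *
      hypL (1 - a) (1 - b) (2 - c)
        (fun t : ℝ => (t : ℂ) ^ (c - 1) * ((x - t : ℝ) : ℂ) ^ (μ - 1)) y
    = (x : ℂ) ^ (c + μ - 1) *
      hypL a b (c + μ)
        (fun s : ℝ => (s : ℂ) ^ (1 - c - μ) * ((s - y : ℝ) : ℂ) ^ (μ - 1)) x := by
  have hx : 0 < x := hy.trans hyx
  have hxy : 0 < x - y := sub_pos.2 hyx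
  rw [hypL_ofReal_cpow_mul_ofReal_cpow (u := fun s => s) (v := fun s => x - s)
      _ _ _ _ _ (fun s => hasDerivAt_id s) (fun s => (hasDerivAt_id s).const_sub x) hy hxy,
    hypL_ofReal_cpow_mul_ofReal_cpow (u := fun s => s) (v := fun s => s - y)
      _ _ _ _ _ (fun s => hasDerivAt_id s) (fun s => (hasDerivAt_id s).sub_const y) hx hxy]
  have hy0 : (y : ℂ) ≠ 0 := ofReal_ne_zero.2 hy.ne'
  have hx0 : (x : ℂ) ≠ 0 := ofReal_ne_zero.2 hx.ne'
  have hy_pow : (y : ℂ) ^ (1 - c) * (y : ℂ) ^ (c - 1) = 1 := by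
    rw [← cpow_add _ _ hy0, show 1 - c + (c - 1) = 0 by ring, cpow_zero]
  have hx_pow : (x : ℂ) ^ (c + μ - 1) * (x : ℂ) ^ (1 - c - μ) = 1 := by
    rw [← cpow_add _ _ hx0, show c + μ - 1 + (1 - c - μ) = 0 by ring, cpow_zero]
  simp only [← mul_assoc, hy_pow, hx_pow, one_mul]
  congr 1
  have hxy0 : (x : ℂ) - y ≠ 0 := by exact_mod_cast hxy.ne'
  push_cast
  field_simp
  ring
end

section
/- Let a, b, c ∈ ℂ with Re(c-1) < Re a < 1, and assume that 2-c is not a nonpositive integer. Then for every real x ∈ (0,1), F(a-c+1, b-c+1; 2-c; x) = (Γ(2-c)/(Γ(a-c+1)Γ(1-a))) · ∫_{1}^{∞} y^{b-1} (y-1)^{-a} (y-x)^{c-b-1} dy (an Euler type integral representation for the solution w₂(x;a,b,c) = x^{1-c} F(a-c+1,b-c+1;2-c;x) of the hypergeometric differential equation, the integral converging absolutely). -/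
open MeasureTheory Set Complex Filter

open scoped Nat

/-!
Substituting `y = 1/t` turns the integral into Euler's integral
`∫₀¹ t^(α-1) (1-t)^(β-1) (1-xt)^(-s) dt` with `α = a-c+1`, `β = 1-a`, `s = b-c+1`.
Expanding `(1-xt)^(-s) = ∑ (s)_k/k! (xt)^k` and integrating termwise, the `k`-th term becomes
`(s)_k/k! x^k B(α+k, β) = Γ(α)Γ(β)/Γ(α+β) · (α)_k (s)_k / ((α+β)_k k!) x^k`, so the integral is
`Γ(α)Γ(β)/Γ(α+β) · F(α, s; α+β; x)`. The termwise integration is dominated by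
`∑ ‖(s)_k/k!‖ x^k · ∫₀¹ |t^(α-1) (1-t)^(β-1)| dt < ∞`.
-/

lemma poch_eq_ascPochhammer_eval (s : ℂ) (k : ℕ) : poch s k = (ascPochhammer ℂ k).eval s := by
  induction k with
  | zero => simp [poch]
  | succ k ih => rw [poch, Finset.prod_range_succ, ← poch, ih, ascPochhammer_succ_eval]

lemma poch_div_factorial (s : ℂ) (k : ℕ) :
    poch s k / (k ! : ℂ) = Ring.choose (s + k - 1) k := by
  rw [Ring.choose_eq_smul, Polynomial.descPochhammer_smeval_eq_ascPochhammer,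
    Polynomial.ascPochhammer_smeval_eq_eval, poch_eq_ascPochhammer_eval, smul_eq_mul]
  ring_nf

lemma mem_eball_zero_one_of_norm_lt_one {z : ℂ} (hz : ‖z‖ < 1) : z ∈ Metric.eball (0 : ℂ) 1 := by
  simpa [← ofReal_norm] using hz

lemma hasSum_poch_div_factorial_mul_pow (s : ℂ) {z : ℂ} (hz : ‖z‖ < 1) :
    HasSum (fun k : ℕ => poch s k / (k ! : ℂ) * z ^ k) ((1 - z) ^ (-s)) := by
  have := (Complex.one_div_one_sub_cpow_hasFPowerSeriesOnBall_zero s).hasSum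
    (mem_eball_zero_one_of_norm_lt_one hz)
  simpa [FormalMultilinearSeries.ofScalars_apply_eq, poch_div_factorial, cpow_neg, mul_comm]
    using this

lemma summable_norm_poch_div_factorial_mul_pow (s : ℂ) {r : ℝ} (hr0 : 0 ≤ r) (hr1 : r < 1) :
    Summable (fun k : ℕ => ‖poch s k / (k ! : ℂ)‖ * r ^ k) := by
  have h := Complex.one_div_one_sub_cpow_hasFPowerSeriesOnBall_zero s
  have hr : (r : ℂ) ∈ Metric.eball (0 : ℂ) _ :=
    (mem_eball_zero_one_of_norm_lt_one (by simpa [abs_of_nonneg hr0] using hr1)).trans_le h.r_le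
  simpa [FormalMultilinearSeries.ofScalars_apply_eq, poch_div_factorial, abs_of_nonneg hr0,
    mul_comm] using (FormalMultilinearSeries.summable_norm_apply _ hr)

lemma ne_neg_natCast_of_re_pos {z : ℂ} (hz : 0 < z.re) (m : ℕ) : z ≠ -m := by
  rintro rfl
  simp only [neg_re, natCast_re, Left.neg_pos_iff] at hz
  exact (Nat.cast_nonneg m).not_gt hz

lemma poch_ne_zero {z : ℂ} (hz : ∀ m : ℕ, z ≠ -m) (k : ℕ) : poch z k ≠ 0 :=
  Finset.prod_ne_zero_iff.mpr fun i _ h => hz i (eq_neg_of_add_eq_zero_left h)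

lemma Gamma_add_nat_eq_poch_mul {z : ℂ} (hz : ∀ m : ℕ, z ≠ -m) (n : ℕ) :
    Gamma (z + n) = poch z n * Gamma z := by
  rw [poch_eq_ascPochhammer_eval, ← Gamma_add_nat_div_Gamma_eq z hz,
    div_mul_cancel₀ _ (Gamma_ne_zero hz)]

lemma betaIntegral_add_nat {α β : ℂ} (hα : 0 < α.re) (hβ : 0 < β.re) (k : ℕ) :
    betaIntegral (α + k) β = Gamma α * Gamma β / Gamma (α + β) * (poch α k / poch (α + β) k) := by
  have hαβ : 0 < (α + β).re := by rw [add_re]; positivity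
  have hαk : 0 < (α + k).re := by rw [add_re, natCast_re]; positivity
  have h := Gamma_mul_Gamma_eq_betaIntegral hαk hβ
  rw [show α + k + β = α + β + k by ring,
    Gamma_add_nat_eq_poch_mul (ne_neg_natCast_of_re_pos hα),
    Gamma_add_nat_eq_poch_mul (ne_neg_natCast_of_re_pos hαβ)] at h
  have hpoch := poch_ne_zero (ne_neg_natCast_of_re_pos hαβ) k
  have hΓ : Gamma (α + β) ≠ 0 := Gamma_ne_zero_of_re_pos hαβ
  field_simp
  linear_combination -h

section Euler

variable {α β : ℂ} (s : ℂ) {x : ℝ}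

lemma integrableOn_betaIntegrand (hα : 0 < α.re) (hβ : 0 < β.re) :
    IntegrableOn (fun t : ℝ => (t : ℂ) ^ (α - 1) * (1 - (t : ℂ)) ^ (β - 1)) (Ioo 0 1) :=
  (intervalIntegrable_iff_integrableOn_Ioo_of_le zero_le_one).1 (betaIntegral_convergent hα hβ)

lemma betaIntegral_eq_integral_Ioo (u v : ℂ) :
    betaIntegral u v = ∫ t in Ioo (0 : ℝ) 1, (t : ℂ) ^ (u - 1) * (1 - (t : ℂ)) ^ (v - 1) := by
  rw [betaIntegral, intervalIntegral.integral_of_le zero_le_one, integral_Ioc_eq_integral_Ioo]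

lemma norm_mul_ofReal_lt_one (hx0 : 0 ≤ x) (hx1 : x < 1) {t : ℝ} (ht : t ∈ Icc (0 : ℝ) 1) :
    ‖(x : ℂ) * t‖ < 1 := by
  rw [← ofReal_mul, norm_real, Real.norm_of_nonneg (mul_nonneg hx0 ht.1)]
  nlinarith [ht.2]

lemma continuousOn_one_sub_mul_cpow (hx0 : 0 ≤ x) (hx1 : x < 1) :
    ContinuousOn (fun t : ℝ => (1 - (x : ℂ) * t) ^ (-s)) (Icc 0 1) := by
  refine ContinuousOn.cpow_const (by fun_prop) fun t ht => ?_
  have hxt : ‖-((x : ℂ) * t)‖ < 1 := (norm_neg _).trans_lt (norm_mul_ofReal_lt_one hx0 hx1 ht)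
  simpa [sub_eq_add_neg] using mem_slitPlane_of_norm_lt_one hxt

lemma integrableOn_eulerIntegrand (hα : 0 < α.re) (hβ : 0 < β.re) (hx0 : 0 ≤ x) (hx1 : x < 1) :
    IntegrableOn (fun t : ℝ => (t : ℂ) ^ (α - 1) * (1 - (t : ℂ)) ^ (β - 1) *
      (1 - (x : ℂ) * t) ^ (-s)) (Ioo 0 1) :=
  (integrableOn_betaIntegrand hα hβ).mul_continuousOn_of_subset
    (continuousOn_one_sub_mul_cpow s hx0 hx1) measurableSet_Ioo isCompact_Icc Ioo_subset_Icc_self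

lemma eulerTerm_eq {t : ℝ} (ht : 0 < t) (k : ℕ) :
    (t : ℂ) ^ (α - 1) * (1 - (t : ℂ)) ^ (β - 1) * (poch s k / (k ! : ℂ) * ((x : ℂ) * t) ^ k) =
      poch s k / (k ! : ℂ) * (x : ℂ) ^ k * ((t : ℂ) ^ (α + k - 1) * (1 - (t : ℂ)) ^ (β - 1)) := by
  have ht' : (t : ℂ) ≠ 0 := ofReal_ne_zero.mpr ht.ne'
  rw [show α + k - 1 = α - 1 + k by ring, cpow_add _ _ ht', cpow_natCast]
  ring

lemma integrableOn_eulerTerm (hα : 0 < α.re) (hβ : 0 < β.re) (k : ℕ) :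
    IntegrableOn (fun t : ℝ => (t : ℂ) ^ (α - 1) * (1 - (t : ℂ)) ^ (β - 1) *
      (poch s k / (k ! : ℂ) * ((x : ℂ) * t) ^ k)) (Ioo 0 1) := by
  have hαk : 0 < (α + k).re := by rw [add_re, natCast_re]; positivity
  exact IntegrableOn.congr_fun ((integrableOn_betaIntegrand hαk hβ).const_mul _)
    (fun t ht => (eulerTerm_eq s ht.1 k).symm) measurableSet_Ioo

lemma integral_eulerTerm (k : ℕ) :
    ∫ t in Ioo (0 : ℝ) 1, (t : ℂ) ^ (α - 1) * (1 - (t : ℂ)) ^ (β - 1) *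
      (poch s k / (k ! : ℂ) * ((x : ℂ) * t) ^ k) =
        poch s k / (k ! : ℂ) * (x : ℂ) ^ k * betaIntegral (α + k) β := by
  rw [setIntegral_congr_fun measurableSet_Ioo (fun t ht => eulerTerm_eq s ht.1 k),
    integral_const_mul, betaIntegral_eq_integral_Ioo]

lemma integral_norm_eulerTerm_le (hx0 : 0 ≤ x) (hα : 0 < α.re) (hβ : 0 < β.re) (k : ℕ) :
    ∫ t in Ioo (0 : ℝ) 1, ‖(t : ℂ) ^ (α - 1) * (1 - (t : ℂ)) ^ (β - 1) *
      (poch s k / (k ! : ℂ) * ((x : ℂ) * t) ^ k)‖ ≤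
        ‖poch s k / (k ! : ℂ)‖ * x ^ k *
          ∫ t in Ioo (0 : ℝ) 1, ‖(t : ℂ) ^ (α - 1) * (1 - (t : ℂ)) ^ (β - 1)‖ := by
  rw [← integral_const_mul]
  refine setIntegral_mono_on (integrableOn_eulerTerm s hα hβ k).norm
    ((integrableOn_betaIntegrand hα hβ).norm.const_mul _) measurableSet_Ioo fun t ht => ?_
  have hxt : ‖(x : ℂ) * t‖ ≤ x := by
    rw [← ofReal_mul, norm_real, Real.norm_of_nonneg (mul_nonneg hx0 ht.1.le)]
    nlinarith [ht.2]
  rw [norm_mul _ (poch s k / _ * _), norm_mul (poch s k / _), norm_pow, mul_comm]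
  gcongr

theorem integral_eulerIntegrand (hα : 0 < α.re) (hβ : 0 < β.re) (hx0 : 0 ≤ x) (hx1 : x < 1) :
    ∫ t in Ioo (0 : ℝ) 1, (t : ℂ) ^ (α - 1) * (1 - (t : ℂ)) ^ (β - 1) * (1 - (x : ℂ) * t) ^ (-s) =
      Gamma α * Gamma β / Gamma (α + β) * hypF α s (α + β) x := by
  have hsum : ∀ t ∈ Ioo (0 : ℝ) 1, HasSum
      (fun k : ℕ => (t : ℂ) ^ (α - 1) * (1 - (t : ℂ)) ^ (β - 1) *
        (poch s k / (k ! : ℂ) * ((x : ℂ) * t) ^ k))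
        ((t : ℂ) ^ (α - 1) * (1 - (t : ℂ)) ^ (β - 1) * (1 - (x : ℂ) * t) ^ (-s)) := fun t ht =>
    (hasSum_poch_div_factorial_mul_pow s
      (norm_mul_ofReal_lt_one hx0 hx1 (Ioo_subset_Icc_self ht))).mul_left _
  have hnorm : Summable fun k : ℕ => ∫ t in Ioo (0 : ℝ) 1, ‖(t : ℂ) ^ (α - 1) *
      (1 - (t : ℂ)) ^ (β - 1) * (poch s k / (k ! : ℂ) * ((x : ℂ) * t) ^ k)‖ :=
    .of_nonneg_of_le (fun k => integral_nonneg fun t => norm_nonneg _)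
      (integral_norm_eulerTerm_le s hx0 hα hβ)
      ((summable_norm_poch_div_factorial_mul_pow s hx0 hx1).mul_right _)
  have hswap := hasSum_integral_of_summable_integral_norm (integrableOn_eulerTerm s hα hβ) hnorm
  rw [setIntegral_congr_fun measurableSet_Ioo fun t ht => (hsum t ht).tsum_eq] at hswap
  rw [← hswap.tsum_eq, hypF, if_pos hx0, ← tsum_mul_left]
  refine tsum_congr fun k => ?_
  rw [integral_eulerTerm, betaIntegral_add_nat hα hβ]
  field_simp

end Euler

section Inversion

variable {E : Type*} [NormedAddCommGroup E] [NormedSpace ℝ E]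

lemma image_inv_Ioo_zero_one : (fun t : ℝ => t⁻¹) '' Ioo 0 1 = Ioi 1 := by
  rw [image_inv_eq_inv, inv_Ioo_0_left one_pos, inv_one]

lemma abs_deriv_inv_smul_eqOn (f : ℝ → E) :
    EqOn (fun t : ℝ => |-(t ^ 2)⁻¹| • f t⁻¹) (fun t => (t ^ 2)⁻¹ • f t⁻¹) (Ioo 0 1) :=
  fun t _ => by simp only [abs_neg, abs_of_nonneg (inv_nonneg.2 (sq_nonneg t))]

lemma integrableOn_Ioi_one_iff_comp_inv (f : ℝ → E) :
    IntegrableOn f (Ioi 1) ↔ IntegrableOn (fun t : ℝ => (t ^ 2)⁻¹ • f t⁻¹) (Ioo 0 1) := by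
  rw [← image_inv_Ioo_zero_one, integrableOn_image_iff_integrableOn_abs_deriv_smul
    measurableSet_Ioo (fun t ht => (hasDerivAt_inv ht.1.ne').hasDerivWithinAt)
    inv_injective.injOn]
  exact integrableOn_congr_fun (abs_deriv_inv_smul_eqOn f) measurableSet_Ioo

lemma integral_Ioi_one_eq_integral_comp_inv (f : ℝ → E) :
    ∫ y in Ioi 1, f y = ∫ t in Ioo (0 : ℝ) 1, (t ^ 2)⁻¹ • f t⁻¹ := by
  rw [← image_inv_Ioo_zero_one, integral_image_eq_integral_abs_deriv_smul
    measurableSet_Ioo (fun t ht => (hasDerivAt_inv ht.1.ne').hasDerivWithinAt)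
    inv_injective.injOn]
  exact setIntegral_congr_fun measurableSet_Ioo (abs_deriv_inv_smul_eqOn f)

end Inversion

lemma inv_sq_smul_integrand_comp_inv (p q r : ℂ) {x t : ℝ} (ht0 : 0 < t) (ht1 : t ≤ 1)
    (hx : x ≤ 1) :
    (t ^ 2)⁻¹ • (((t⁻¹ : ℝ) : ℂ) ^ p * ((t⁻¹ - 1 : ℝ) : ℂ) ^ q * ((t⁻¹ - x : ℝ) : ℂ) ^ r) =
      (t : ℂ) ^ (-p - q - r - 2) * (1 - (t : ℂ)) ^ q * (1 - (x : ℂ) * t) ^ r := by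
  have ht' : (t : ℂ) ≠ 0 := ofReal_ne_zero.mpr ht0.ne'
  have hxt : 0 ≤ 1 - x * t := by
    rcases le_or_gt x 0 with h | h <;> nlinarith
  have inv_cpow (u : ℂ) : ((t⁻¹ : ℝ) : ℂ) ^ u = (t : ℂ) ^ (-u) := by
    rw [ofReal_inv, inv_cpow _ _ (by rw [arg_ofReal_of_nonneg ht0.le]; exact Real.pi_ne_zero.symm),
      ← cpow_neg]
  have e1 : ((t⁻¹ - 1 : ℝ) : ℂ) ^ q = (1 - (t : ℂ)) ^ q * (t : ℂ) ^ (-q) := by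
    rw [show t⁻¹ - 1 = (1 - t) * t⁻¹ by field_simp, ofReal_mul,
      mul_cpow_ofReal_nonneg (by linarith) (by positivity), inv_cpow]
    push_cast; rfl
  have e2 : ((t⁻¹ - x : ℝ) : ℂ) ^ r = (1 - (x : ℂ) * t) ^ r * (t : ℂ) ^ (-r) := by
    rw [show t⁻¹ - x = (1 - x * t) * t⁻¹ by field_simp, ofReal_mul,
      mul_cpow_ofReal_nonneg hxt (by positivity), inv_cpow]
    push_cast; rfl
  have e3 : (((t ^ 2)⁻¹ : ℝ) : ℂ) = (t : ℂ) ^ (-2 : ℂ) := by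
    rw [cpow_neg, show (2 : ℂ) = (2 : ℕ) by norm_num, cpow_natCast]
    push_cast; rfl
  rw [real_smul, e3, inv_cpow, e1, e2, show -p - q - r - 2 = -2 + -p + -q + -r by ring,
    cpow_add _ _ ht', cpow_add _ _ ht', cpow_add _ _ ht']
  ring

theorem stmt_17_general (a b c : ℂ) (ha1 : (c - 1).re < a.re) (ha2 : a.re < 1)
    (x : ℝ) (hx0 : 0 < x) (hx1 : x < 1) :
    IntegrableOn
      (fun y : ℝ => (y : ℂ) ^ (b - 1) * ((y - 1 : ℝ) : ℂ) ^ (-a) *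
        ((y - x : ℝ) : ℂ) ^ (c - b - 1)) (Ioi (1:ℝ))
    ∧
    hypF (a - c + 1) (b - c + 1) (2 - c) x
      = Complex.Gamma (2 - c) / (Complex.Gamma (a - c + 1) * Complex.Gamma (1 - a)) *
        ∫ y in Ioi (1:ℝ),
          (y : ℂ) ^ (b - 1) * ((y - 1 : ℝ) : ℂ) ^ (-a) * ((y - x : ℝ) : ℂ) ^ (c - b - 1) := by
  have hα : 0 < (a - c + 1).re := by simp only [sub_re, one_re, add_re] at ha1 ⊢; linarith
  have hβ : 0 < (1 - a).re := by simp only [sub_re, one_re]; linarith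
  have hE : EqOn (fun t : ℝ => (t ^ 2)⁻¹ • (((t⁻¹ : ℝ) : ℂ) ^ (b - 1) * ((t⁻¹ - 1 : ℝ) : ℂ) ^ (-a) *
        ((t⁻¹ - x : ℝ) : ℂ) ^ (c - b - 1)))
      (fun t : ℝ => (t : ℂ) ^ (a - c + 1 - 1) * (1 - (t : ℂ)) ^ (1 - a - 1) *
        (1 - (x : ℂ) * t) ^ (-(b - c + 1))) (Ioo 0 1) := fun t ht => by
    dsimp only
    rw [inv_sq_smul_integrand_comp_inv _ _ _ ht.1 ht.2.le hx1.le]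
    ring_nf
  refine ⟨(integrableOn_Ioi_one_iff_comp_inv _).2 ?_, ?_⟩
  · exact (integrableOn_eulerIntegrand _ hα hβ hx0.le hx1).congr_fun hE.symm measurableSet_Ioo
  · rw [integral_Ioi_one_eq_integral_comp_inv, setIntegral_congr_fun measurableSet_Ioo hE,
      integral_eulerIntegrand _ hα hβ hx0.le hx1, show (2 : ℂ) - c = a - c + 1 + (1 - a) by ring]
    have hΓα := Gamma_ne_zero_of_re_pos hα
    have hΓβ := Gamma_ne_zero_of_re_pos hβ
    have hΓαβ : Gamma (a - c + 1 + (1 - a)) ≠ 0 :=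
      Gamma_ne_zero_of_re_pos (by rw [add_re]; exact add_pos hα hβ)
    field_simp

/-- Euler type integral representation for the solution
`w₂(x;a,b,c) = x^{1-c} F(a-c+1,b-c+1;2-c;x)` of the hypergeometric differential
equation; the integral converges absolutely. -/
theorem stmt_17 (a b c : ℂ) (ha1 : (c - 1).re < a.re) (ha2 : a.re < 1)
    (h1 : ∀ n : ℕ, 2 - c ≠ -(n : ℂ))
    (x : ℝ) (hx0 : 0 < x) (hx1 : x < 1) :
    IntegrableOn
      (fun y : ℝ => (y : ℂ) ^ (b - 1) * ((y - 1 : ℝ) : ℂ) ^ (-a) *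
        ((y - x : ℝ) : ℂ) ^ (c - b - 1)) (Ioi (1:ℝ))
    ∧
    hypF (a - c + 1) (b - c + 1) (2 - c) x
      = Complex.Gamma (2 - c) / (Complex.Gamma (a - c + 1) * Complex.Gamma (1 - a)) *
        ∫ y in Ioi (1:ℝ),
          (y : ℂ) ^ (b - 1) * ((y - 1 : ℝ) : ℂ) ^ (-a) * ((y - x : ℝ) : ℂ) ^ (c - b - 1) :=
  stmt_17_general a b c ha1 ha2 x hx0 hx1
end

section
/- Let μ, ν ∈ ℂ with Re(1-ν) > Re μ > 0, let m ∈ ℝ, let x be a real number with x < m, and let f : (m,∞) → ℂ be a locally integrable function such that ∫_m^∞ |f(z)| (z-x)^{Re μ + Re ν - 1} dz < ∞. Then ∫_{m}^{∞} ( ∫_m^y f(z) (y-z)^{μ-1}/Γ(μ) dz ) · Γ(1-ν) (y-x)^{ν-1} dy = ∫_m^∞ f(z) Γ(1-μ-ν) (z-x)^{μ+ν-1} dz; that is, the generalized Stieltjes transform of order 1-ν of the fractional integral of order μ of f equals the generalized Stieltjes transform of order 1-μ-ν of f. -/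
open MeasureTheory Set Complex Filter

/-!
Writing out the fractional integral, the left-hand side is a double integral over
`m < z < y` of `f z (y - z)^(μ-1) (y - x)^(ν-1)`. The substitution `y = x + (z - x) / s`
turns the inner integral in `y` into `(z - x)^(μ+ν-1) B(1 - μ - ν, μ)`; applied to the real
parts, the same computation and the integrability hypothesis on `f` show that the double
integral converges absolutely, so Fubini lets us integrate in `y` first. The constants then
combine through `Γ(1 - ν) B(1 - μ - ν, μ) = Γ(1 - μ - ν) Γ(μ)`.
-/

lemma ofReal_cpow_eq_exp_log_mul {a : ℝ} (ha : 0 < a) (w : ℂ) :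
    (a : ℂ) ^ w = exp (Real.log a * w) := by
  rw [cpow_def_of_ne_zero (ofReal_ne_zero.2 ha.ne'), ofReal_log ha.le]

lemma Gamma_add_mul_betaIntegral_div_Gamma {s t : ℂ} (hs : 0 < s.re) (ht : 0 < t.re) :
    Gamma (s + t) * betaIntegral s t / Gamma t = Gamma s := by
  rw [← Gamma_mul_Gamma_eq_betaIntegral hs ht, mul_div_assoc,
    div_self (Gamma_ne_zero_of_re_pos ht), mul_one]

section BetaSubstitution

variable {x b : ℝ}

lemma image_Ioo_zero_one_add_mul_inv (hxb : x < b) :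
    (fun s : ℝ => x + (b - x) * s⁻¹) '' Ioo 0 1 = Ioi b := by
  have hc : 0 < b - x := sub_pos.2 hxb
  ext y
  constructor
  · rintro ⟨s, ⟨hs0, hs1⟩, rfl⟩
    have : b - x < (b - x) * s⁻¹ := lt_mul_of_one_lt_right hc ((one_lt_inv₀ hs0).2 hs1)
    simp only [mem_Ioi]
    linarith
  · intro (hy : b < y)
    have hyx : 0 < y - x := by linarith
    refine ⟨(b - x) / (y - x), ⟨div_pos hc hyx, (div_lt_one hyx).2 (by linarith)⟩, ?_⟩
    field_simp
    ring

lemma injective_add_mul_inv {c : ℝ} (hc : c ≠ 0) (x : ℝ) :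
    Function.Injective fun s : ℝ => x + c * s⁻¹ :=
  fun _ _ h => inv_injective (mul_left_cancel₀ hc (add_left_cancel h))

lemma hasDerivWithinAt_add_mul_inv (x c : ℝ) {s : ℝ} (hs : s ∈ Ioo (0 : ℝ) 1) :
    HasDerivWithinAt (fun s : ℝ => x + c * s⁻¹) (c * -(s ^ 2)⁻¹) (Ioo 0 1) s :=
  (((hasDerivAt_inv hs.1.ne').const_mul c).const_add x).hasDerivWithinAt

lemma abs_deriv_smul_sub_cpow_mul_sub_cpow (hxb : x < b) {s : ℝ} (hs : s ∈ Ioo (0 : ℝ) 1)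
    (u v : ℂ) :
    |(b - x) * -(s ^ 2)⁻¹| • (((x + (b - x) * s⁻¹ - b : ℝ) : ℂ) ^ (u - 1) *
        ((x + (b - x) * s⁻¹ - x : ℝ) : ℂ) ^ (v - 1))
      = ((b - x : ℝ) : ℂ) ^ (u + v - 1) *
          ((s : ℂ) ^ (1 - u - v - 1) * (1 - (s : ℂ)) ^ (u - 1)) := by
  obtain ⟨hs0, hs1⟩ := hs
  have hc : 0 < b - x := sub_pos.2 hxb
  have h1s : 0 < 1 - s := sub_pos.2 hs1
  have e1 : x + (b - x) * s⁻¹ - b = (b - x) * (1 - s) * s⁻¹ := by field_simp; ring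
  have e2 : x + (b - x) * s⁻¹ - x = (b - x) * s⁻¹ := by ring
  have e3 : |(b - x) * -(s ^ 2)⁻¹| = (b - x) * (s ^ 2)⁻¹ := by
    rw [abs_mul, abs_neg, abs_of_pos hc, abs_of_pos (by positivity)]
  have e4 : ((b - x) * (s ^ 2)⁻¹ : ℝ) = Real.exp (Real.log ((b - x) * (s ^ 2)⁻¹)) :=
    (Real.exp_log (by positivity)).symm
  have e5 : 1 - (s : ℂ) = ((1 - s : ℝ) : ℂ) := by push_cast; rfl
  -- with every factor written as `exp (log _ * _)`, the identity is one between exponents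
  rw [e1, e2, e3, e4, e5, real_smul, ofReal_exp,
    ofReal_cpow_eq_exp_log_mul (by positivity), ofReal_cpow_eq_exp_log_mul (by positivity),
    ofReal_cpow_eq_exp_log_mul hc, ofReal_cpow_eq_exp_log_mul hs0,
    ofReal_cpow_eq_exp_log_mul h1s, ← exp_add, ← exp_add, ← exp_add, ← exp_add]
  congr 1
  simp only [Real.log_mul, Real.log_inv, Real.log_pow, hc.ne', h1s.ne', hs0.ne', ne_eq,
    inv_eq_zero, mul_eq_zero, pow_eq_zero_iff, or_self, not_false_eq_true, OfNat.ofNat_ne_zero]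
  push_cast
  ring

lemma integrableOn_Ioi_sub_cpow_mul_sub_cpow {u v : ℂ} (hu : 0 < u.re)
    (huv : 0 < (1 - u - v).re) (hxb : x < b) :
    IntegrableOn (fun y : ℝ => ((y - b : ℝ) : ℂ) ^ (u - 1) * ((y - x : ℝ) : ℂ) ^ (v - 1))
      (Ioi b) := by
  rw [← image_Ioo_zero_one_add_mul_inv hxb, integrableOn_image_iff_integrableOn_abs_deriv_smul
    measurableSet_Ioo (fun s hs => hasDerivWithinAt_add_mul_inv x (b - x) hs)
    (injective_add_mul_inv (sub_pos.2 hxb).ne' x).injOn]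
  refine IntegrableOn.congr_fun ?_
    (fun s hs => (abs_deriv_smul_sub_cpow_mul_sub_cpow hxb hs u v).symm) measurableSet_Ioo
  have hβ := (intervalIntegrable_iff_integrableOn_Ioc_of_le zero_le_one).1
    (betaIntegral_convergent huv hu)
  exact (hβ.mono_set Ioo_subset_Ioc_self).const_mul _

-- When the integrals diverge, both sides are `0`.
lemma integral_Ioi_sub_cpow_mul_sub_cpow (u v : ℂ) (hxb : x < b) :
    ∫ y in Ioi b, ((y - b : ℝ) : ℂ) ^ (u - 1) * ((y - x : ℝ) : ℂ) ^ (v - 1)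
      = ((b - x : ℝ) : ℂ) ^ (u + v - 1) * betaIntegral (1 - u - v) u := by
  rw [← image_Ioo_zero_one_add_mul_inv hxb, integral_image_eq_integral_abs_deriv_smul
    measurableSet_Ioo (fun s hs => hasDerivWithinAt_add_mul_inv x (b - x) hs)
    (injective_add_mul_inv (sub_pos.2 hxb).ne' x).injOn,
    setIntegral_congr_fun measurableSet_Ioo
      fun s hs => abs_deriv_smul_sub_cpow_mul_sub_cpow hxb hs u v,
    integral_const_mul, betaIntegral, intervalIntegral.integral_of_le zero_le_one,
    integral_Ioc_eq_integral_Ioo]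

lemma integral_Ioi_sub_rpow_mul_sub_rpow (σ τ : ℝ) (hxb : x < b) :
    ∫ y in Ioi b, (y - b) ^ (σ - 1) * (y - x) ^ (τ - 1)
      = (b - x) ^ (σ + τ - 1) * (betaIntegral (1 - σ - τ) σ).re := by
  have h := integral_Ioi_sub_cpow_mul_sub_cpow (σ : ℂ) τ hxb
  rw [setIntegral_congr_fun measurableSet_Ioi fun y (hy : b < y) => by
      rw [← ofReal_one, ← ofReal_sub, ← ofReal_sub, ← ofReal_cpow (by linarith),
        ← ofReal_cpow (by linarith), ← ofReal_mul],
    integral_complex_ofReal, ← ofReal_one, ← ofReal_add, ← ofReal_sub,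
    ← ofReal_cpow (sub_pos.2 hxb).le] at h
  simpa using congrArg re h

end BetaSubstitution

noncomputable def fracStieltjesIntegrand (μ ν : ℂ) (x : ℝ) (f : ℝ → ℂ) : ℝ × ℝ → ℂ :=
  {p : ℝ × ℝ | p.2 < p.1}.indicator fun p =>
    f p.2 * ((p.1 - p.2 : ℝ) : ℂ) ^ (μ - 1) * ((p.1 - x : ℝ) : ℂ) ^ (ν - 1)

namespace fracStieltjesIntegrand

variable {μ ν : ℂ} {x m : ℝ} {f : ℝ → ℂ}

lemma section_left (y : ℝ) :
    (fun z => fracStieltjesIntegrand μ ν x f (y, z)) = (Iio y).indicator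
      fun z => f z * ((y - z : ℝ) : ℂ) ^ (μ - 1) * ((y - x : ℝ) : ℂ) ^ (ν - 1) := by
  ext z
  simp only [fracStieltjesIntegrand, indicator_apply, mem_ofPred_eq, mem_Iio]

lemma section_right (z : ℝ) :
    (fun y => fracStieltjesIntegrand μ ν x f (y, z)) = (Ioi z).indicator
      fun y => f z * (((y - z : ℝ) : ℂ) ^ (μ - 1) * ((y - x : ℝ) : ℂ) ^ (ν - 1)) := by
  ext y
  simp only [fracStieltjesIntegrand, indicator_apply, mem_ofPred_eq, mem_Ioi, mul_assoc]

lemma setIntegral_section_left (y : ℝ) :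
    ∫ z in Ioi m, fracStieltjesIntegrand μ ν x f (y, z)
      = (∫ z in Ioo m y, f z * ((y - z : ℝ) : ℂ) ^ (μ - 1)) * ((y - x : ℝ) : ℂ) ^ (ν - 1) := by
  rw [section_left, setIntegral_indicator measurableSet_Iio, Ioi_inter_Iio, integral_mul_const]

variable {z : ℝ}

lemma integrableOn_section_right (hμ : 0 < μ.re) (hμν : 0 < (1 - μ - ν).re) (hxz : x < z)
    (hmz : m ≤ z) :
    IntegrableOn (fun y => fracStieltjesIntegrand μ ν x f (y, z)) (Ioi m) := by
  rw [section_right, integrableOn_indicator_iff measurableSet_Ioi,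
    inter_eq_left.2 (Ioi_subset_Ioi hmz)]
  exact (integrableOn_Ioi_sub_cpow_mul_sub_cpow hμ hμν hxz).const_mul (f z)

lemma setIntegral_section_right (hxz : x < z) (hmz : m ≤ z) :
    ∫ y in Ioi m, fracStieltjesIntegrand μ ν x f (y, z)
      = f z * (((z - x : ℝ) : ℂ) ^ (μ + ν - 1) * betaIntegral (1 - μ - ν) μ) := by
  rw [section_right, setIntegral_indicator measurableSet_Ioi,
    inter_eq_right.2 (Ioi_subset_Ioi hmz), integral_const_mul,
    integral_Ioi_sub_cpow_mul_sub_cpow μ ν hxz]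

lemma setIntegral_norm_section_right (hxz : x < z) (hmz : m ≤ z) :
    ∫ y in Ioi m, ‖fracStieltjesIntegrand μ ν x f (y, z)‖
      = ‖f z‖ * (z - x) ^ (μ.re + ν.re - 1) * (betaIntegral (1 - μ.re - ν.re) μ.re).re := by
  have h : (fun y => ‖fracStieltjesIntegrand μ ν x f (y, z)‖) = (Ioi z).indicator
      fun y => ‖f z * (((y - z : ℝ) : ℂ) ^ (μ - 1) * ((y - x : ℝ) : ℂ) ^ (ν - 1))‖ :=
    funext fun y => by rw [← norm_indicator_eq_indicator_norm, ← section_right]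
  rw [h, setIntegral_indicator measurableSet_Ioi, inter_eq_right.2 (Ioi_subset_Ioi hmz),
    setIntegral_congr_fun measurableSet_Ioi fun y (hy : z < y) => by
      rw [norm_mul, norm_mul, norm_cpow_eq_rpow_re_of_pos (sub_pos.2 hy),
        norm_cpow_eq_rpow_re_of_pos (by linarith)],
    integral_const_mul]
  simp only [sub_re, one_re]
  rw [integral_Ioi_sub_rpow_mul_sub_rpow μ.re ν.re hxz, mul_assoc]

lemma integrable (hμ : 0 < μ.re) (hμν : 0 < (1 - μ - ν).re) (hxm : x < m)
    (hf : AEStronglyMeasurable f (volume.restrict (Ioi m)))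
    (hint : IntegrableOn (fun z : ℝ => ‖f z‖ * (z - x) ^ (μ.re + ν.re - 1)) (Ioi m)) :
    Integrable (fracStieltjesIntegrand μ ν x f)
      ((volume.restrict (Ioi m)).prod (volume.restrict (Ioi m))) := by
  have hmeas : AEStronglyMeasurable (fracStieltjesIntegrand μ ν x f)
      ((volume.restrict (Ioi m)).prod (volume.restrict (Ioi m))) := by
    refine AEStronglyMeasurable.indicator ?_ (measurableSet_lt measurable_snd measurable_fst)
    refine (hf.comp_snd.mul ?_).mul ?_ <;>
      exact (Measurable.pow_const (by fun_prop) _).aestronglyMeasurable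
  rw [integrable_prod_iff' hmeas]
  constructor
  · filter_upwards [ae_restrict_mem measurableSet_Ioi] with z (hz : m < z)
    exact integrableOn_section_right hμ hμν (hxm.trans hz) hz.le
  · refine (hint.mul_const (betaIntegral (1 - μ.re - ν.re) μ.re).re).congr ?_
    filter_upwards [ae_restrict_mem measurableSet_Ioi] with z (hz : m < z)
    exact (setIntegral_norm_section_right (hxm.trans hz) hz.le).symm

end fracStieltjesIntegrand

/-- The generalized Stieltjes transform of order `1-ν` of the fractional integral of
order `μ` of `f` equals the generalized Stieltjes transform of order `1-μ-ν` of `f`. -/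
theorem stmt_19 (μ ν : ℂ) (hμν : μ.re < (1 - ν).re) (hμ : 0 < μ.re)
    (m : ℝ) (x : ℝ) (hxm : x < m) (f : ℝ → ℂ)
    (hf : LocallyIntegrableOn f (Ioi m))
    (hint : IntegrableOn (fun z : ℝ => ‖f z‖ * (z - x) ^ (μ.re + ν.re - 1)) (Ioi m)) :
    ∫ y in Ioi m,
        (∫ z in Ioo m y, f z * (((y - z : ℝ) : ℂ) ^ (μ - 1) / Complex.Gamma μ)) *
          (Complex.Gamma (1 - ν) * ((y - x : ℝ) : ℂ) ^ (ν - 1))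
      = ∫ z in Ioi m, f z * Complex.Gamma (1 - μ - ν) * ((z - x : ℝ) : ℂ) ^ (μ + ν - 1) := by
  have hμν' : 0 < (1 - μ - ν).re := by simp only [sub_re, one_re] at hμν ⊢; linarith
  have hΓ := Gamma_add_mul_betaIntegral_div_Gamma hμν' hμ
  rw [show 1 - μ - ν + μ = 1 - ν by ring] at hΓ
  have hK := fracStieltjesIntegrand.integrable hμ hμν' hxm hf.aestronglyMeasurable hint
  calc _ = ∫ y in Ioi m,
          Gamma (1 - ν) / Gamma μ * ∫ z in Ioi m, fracStieltjesIntegrand μ ν x f (y, z) := by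
        refine integral_congr_ae (ae_of_all _ fun y => ?_)
        simp_rw [fracStieltjesIntegrand.setIntegral_section_left, ← mul_div_assoc, integral_div]
        ring
    _ = Gamma (1 - ν) / Gamma μ *
          ∫ z in Ioi m, ∫ y in Ioi m, fracStieltjesIntegrand μ ν x f (y, z) := by
        rw [integral_const_mul,
          integral_integral_swap (f := fun y z => fracStieltjesIntegrand μ ν x f (y, z)) hK]
    _ = _ := by
        rw [← integral_const_mul]
        refine setIntegral_congr_fun measurableSet_Ioi fun z (hz : m < z) => ?_
        rw [fracStieltjesIntegrand.setIntegral_section_right (hxm.trans hz) hz.le, ← hΓ]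
        ring
end
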